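/- arXiv:math/9801105 — 6 statements merged into one kernel-verified Lean document; each statement's English description precedes it below -/
import Mathlib

section
/- Let N ≥ 1 be an integer and q ∈ ℂ with 0 < |q| < 1. Define τ_N(z) = z^{2/N−2} · Θ_{q^{2N}}(q z²)/Θ_{q^{2N}}(q z^{−2}). Then τ_N is periodic with period q^N: τ_N(q^N z) = τ_N(z), where the power z^{2/N} is computed with a determination of the logarithm satisfying log(q^N z) = N log q + log z. -/
open Complex

/-- The infinite `q`-Pochhammer product `(z;p)_∞ = ∏_{n≥0} (1 − z pⁿ)`. -/
noncomputable def qPoch (z p : ℂ) : ℂ := ∏' n : ℕ, (1 - z * p ^ n)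

/-- The Jacobi theta function `Θ_p(z) = (z;p)_∞ (p z⁻¹;p)_∞ (p;p)_∞`. -/
noncomputable def jTheta (p z : ℂ) : ℂ := qPoch z p * qPoch (p * z⁻¹) p * qPoch p p

/-- The function `τ_N(z) = z^{2/N−2} Θ_{q^{2N}}(q z²)/Θ_{q^{2N}}(q z⁻²)`, the fractional power
`z^{2/N−2}` being computed via a fixed branch `Lg` of the logarithm. -/
noncomputable def tauN (N : ℕ) (q : ℂ) (Lg : ℂ → ℂ) (z : ℂ) : ℂ :=
  Complex.exp ((2 / (N : ℂ) - 2) * Lg z) * jTheta (q ^ (2 * N)) (q * z ^ 2)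
    / jTheta (q ^ (2 * N)) (q * z⁻¹ ^ 2)

/-!
Since `(z;p)_∞ = (1 - z) (pz;p)_∞`, the theta function is quasi-periodic:
`Θ_p(p w) = -w⁻¹ Θ_p(w)`. With `p = q^{2N}`, replacing `z` by `q^N z` multiplies `q z²` by `p`
and divides `q z⁻²` by `p`, so the theta quotient in `τ_N` picks up the factor `q^{2N-2}`.
The branch condition makes the prefactor `z^{2/N-2}` pick up exactly the inverse factor
`q^{2-2N}`.
-/

lemma multipliable_one_sub_mul_pow {p : ℂ} (hp : ‖p‖ < 1) (z : ℂ) :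
    Multipliable fun n : ℕ => 1 - z * p ^ n := by
  simpa only [sub_eq_add_neg] using Complex.multipliable_one_add_of_summable
    ((summable_geometric_of_norm_lt_one hp).mul_left z).neg

lemma qPoch_eq_one_sub_mul_qPoch_mul {p : ℂ} (hp : ‖p‖ < 1) (z : ℂ) :
    qPoch z p = (1 - z) * qPoch (p * z) p := by
  have htail : Multipliable fun n : ℕ => 1 - z * p ^ (n + 1) :=
    (multipliable_one_sub_mul_pow hp (p * z)).congr fun n => by ring
  rw [qPoch, tprod_eq_zero_mul' (f := fun n : ℕ => 1 - z * p ^ n) htail, pow_zero, mul_one, qPoch]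
  congr 1
  exact tprod_congr fun n => by ring

lemma jTheta_mul_left {p : ℂ} (hp : ‖p‖ < 1) (hp0 : p ≠ 0) {w : ℂ} (hw : w ≠ 0) :
    jTheta p (p * w) = -w⁻¹ * jTheta p w := by
  have hinv : p * (p * w)⁻¹ = w⁻¹ := by field_simp
  have hfac : (1 : ℂ) - w⁻¹ = -w⁻¹ * (1 - w) := by field_simp; ring
  rw [jTheta, jTheta, hinv, qPoch_eq_one_sub_mul_qPoch_mul hp w⁻¹,
    qPoch_eq_one_sub_mul_qPoch_mul hp w, hfac]
  ring

lemma jTheta_quotient_pow_mul {q : ℂ} (hq0 : q ≠ 0) {N : ℕ} (hp : ‖q ^ (2 * N)‖ < 1)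
    {z : ℂ} (hz : z ≠ 0) :
    jTheta (q ^ (2 * N)) (q * (q ^ N * z) ^ 2) / jTheta (q ^ (2 * N)) (q * (q ^ N * z)⁻¹ ^ 2) =
      q ^ (2 * N - 2 : ℤ) *
        (jTheta (q ^ (2 * N)) (q * z ^ 2) / jTheta (q ^ (2 * N)) (q * z⁻¹ ^ 2)) := by
  set p := q ^ (2 * N)
  set w := q * (q ^ N * z)⁻¹ ^ 2
  have hp0 : p ≠ 0 := pow_ne_zero _ hq0
  have hw0 : w ≠ 0 := by simp [w, hq0, hz]
  have hnum : q * (q ^ N * z) ^ 2 = p * (q * z ^ 2) := by ring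
  have hden : q * z⁻¹ ^ 2 = p * w := by simp only [p, w]; field_simp; ring
  have hscale : q ^ (2 * N - 2 : ℤ) = (q * z ^ 2)⁻¹ * w⁻¹ := by
    simp only [w, zpow_sub₀ hq0]; field_simp; norm_cast; ring
  rw [hnum, hden, jTheta_mul_left hp hp0 (by simp [hq0, hz]), jTheta_mul_left hp hp0 hw0,
    hscale]
  field_simp

lemma exp_mul_branch_pow_mul {N : ℕ} (hN : N ≠ 0) {q : ℂ}
    {Lg : ℂ → ℂ} (hLg : Complex.exp (Lg q) = q) {z : ℂ}
    (hbranch : Lg (q ^ N * z) = (N : ℂ) * Lg q + Lg z) :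
    Complex.exp ((2 / (N : ℂ) - 2) * Lg (q ^ N * z)) =
      q ^ (2 - 2 * N : ℤ) * Complex.exp ((2 / (N : ℂ) - 2) * Lg z) := by
  have hsplit : (2 / (N : ℂ) - 2) * ((N : ℂ) * Lg q + Lg z) =
      ((2 - 2 * N : ℤ) : ℂ) * Lg q + (2 / (N : ℂ) - 2) * Lg z := by
    push_cast; field_simp
  rw [hbranch, hsplit, Complex.exp_add, Complex.exp_int_mul, hLg]

/-- `τ_N` is periodic with period `q^N`: `τ_N(q^N z) = τ_N(z)`, where the power `z^{2/N}` is
computed with a determination `Lg` of the logarithm satisfying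
`log (q^N z) = N log q + log z`. -/
theorem stmt3 (N : ℕ) (hN : 1 ≤ N) (q : ℂ)
    (hq0 : 0 < ‖q‖) (hq1 : ‖q‖ < 1)
    (Lg : ℂ → ℂ) (hLg : ∀ w : ℂ, w ≠ 0 → Complex.exp (Lg w) = w)
    (z : ℂ) (hz : z ≠ 0)
    (hbranch : Lg (q ^ N * z) = (N : ℂ) * Lg q + Lg z) :
    tauN N q Lg (q ^ N * z) = tauN N q Lg z := by
  have hq : q ≠ 0 := norm_pos_iff.mp hq0
  have hp : ‖q ^ (2 * N)‖ < 1 := by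
    rw [norm_pow]; exact pow_lt_one₀ (norm_nonneg q) hq1 (by omega)
  have hcancel : q ^ (2 - 2 * N : ℤ) * q ^ (2 * N - 2 : ℤ) = 1 := by
    rw [← zpow_add₀ hq]; ring_nf; exact zpow_zero q
  simp only [tauN, mul_div_assoc]
  rw [exp_mul_branch_pow_mul (by omega) (hLg q hq) hbranch, jTheta_quotient_pow_mul hq hp hz,
    mul_mul_mul_comm, hcancel, one_mul]
end

section
/- Let N ≥ 1 be an integer and q ∈ ℂ with 0 < |q| < 1, and let τ_N(z) = z^{2/N−2} Θ_{q^{2N}}(q z²)/Θ_{q^{2N}}(q z^{−2}). Then for all x where both sides are defined, τ_N(q^{1/2} x)^{−1} · τ_N(q^{1/2} x^{−1})^{−1} = q^{2−2/N} · Θ_{q^{2N}}(x²) Θ_{q^{2N}}(x^{−2}) / ( Θ_{q^{2N}}(q² x²) Θ_{q^{2N}}(q² x^{−2}) ), where q^{1/2} is a fixed square root of q and the fractional powers are taken with determinations satisfying (q^{1/2}x)^{2/N} · (q^{1/2}x^{−1})^{2/N} = q^{2/N}. -/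
/-!
Put `z = q^{1/2} x`. Then `q z² = q² x²` and `q z⁻² = x⁻²`, so `τ_N(q^{1/2} x)` is
`(q^{1/2}x)^{2/N} (q x²)⁻¹ Θ(q² x²) / Θ(x⁻²)`, and likewise with `x⁻¹` in place of `x`.
In the product of the two inverses the four theta values are exactly those of the right-hand
side, the factors `q x²` and `q x⁻²` multiply to `q²`, and the two fractional powers
multiply to `q^{2/N}` by the choice of determinations.
-/

open Complex

/-- The function `τ_N(z) = z^{2/N−2} Θ_{q^{2N}}(q z²)/Θ_{q^{2N}}(q z⁻²)`, the fractional power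
`z^{2/N}` being given by the fixed determination `P` (so `z^{2/N−2} = P z · z⁻²`). -/
noncomputable def tauNP (N : ℕ) (q : ℂ) (P : ℂ → ℂ) (z : ℂ) : ℂ :=
  P z * z ^ (-2 : ℤ) * jTheta (q ^ (2 * N)) (q * z ^ 2) / jTheta (q ^ (2 * N)) (q * z⁻¹ ^ 2)

theorem tauNP_sqrt_mul {N : ℕ} {q sq : ℂ} (hq : q ≠ 0) (hsq : sq ^ 2 = q) (P : ℂ → ℂ) (x : ℂ) :
    tauNP N q P (sq * x) =
      P (sq * x) * (q * x ^ 2)⁻¹ * jTheta (q ^ (2 * N)) (q ^ 2 * x ^ 2)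
        / jTheta (q ^ (2 * N)) (x⁻¹ ^ 2) := by
  have hsx : (sq * x) ^ 2 = q * x ^ 2 := by rw [mul_pow, hsq]
  have hshift : q * (sq * x)⁻¹ ^ 2 = x⁻¹ ^ 2 := by
    rw [inv_pow, hsx, mul_inv, mul_inv_cancel_left₀ hq, inv_pow]
  rw [tauNP, hshift, zpow_neg, zpow_ofNat, hsx, ← mul_assoc, ← pow_two]

theorem stmt9_general (N : ℕ) (q sq : ℂ)
    (hq0 : 0 < ‖q‖) (hsq : sq ^ 2 = q)
    (P : ℂ → ℂ)
    (qp : ℂ)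
    (x : ℂ) (hx : x ≠ 0)
    (hbranch : P (sq * x) * P (sq * x⁻¹) = qp) :
    (tauNP N q P (sq * x))⁻¹ * (tauNP N q P (sq * x⁻¹))⁻¹ =
      q ^ 2 * qp⁻¹ * jTheta (q ^ (2 * N)) (x ^ 2) * jTheta (q ^ (2 * N)) (x⁻¹ ^ 2)
        / (jTheta (q ^ (2 * N)) (q ^ 2 * x ^ 2) * jTheta (q ^ (2 * N)) (q ^ 2 * x⁻¹ ^ 2)) := by
  have hq : q ≠ 0 := norm_pos_iff.mp hq0
  rw [tauNP_sqrt_mul hq hsq, tauNP_sqrt_mul hq hsq, inv_inv, ← hbranch]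
  field_simp

/-- The identity
`τ_N(q^{1/2}x)⁻¹ τ_N(q^{1/2}x⁻¹)⁻¹ = q^{2−2/N} Θ_{q^{2N}}(x²)Θ_{q^{2N}}(x⁻²) /
(Θ_{q^{2N}}(q²x²)Θ_{q^{2N}}(q²x⁻²))`,
where `sq` is a fixed square root of `q`, `P` is a determination of the power `w ↦ w^{2/N}`,
`qp` is a determination of `q^{2/N}` (so `q^{2−2/N} = q² qp⁻¹`), and the determinations satisfy
`(q^{1/2}x)^{2/N} (q^{1/2}x⁻¹)^{2/N} = q^{2/N}`. -/
theorem stmt9 (N : ℕ) (hN : 1 ≤ N) (q sq : ℂ)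
    (hq0 : 0 < ‖q‖) (hq1 : ‖q‖ < 1) (hsq : sq ^ 2 = q)
    (P : ℂ → ℂ) (hP : ∀ w : ℂ, w ≠ 0 → P w ^ N = w ^ 2)
    (qp : ℂ) (hqp : qp ^ N = q ^ 2)
    (x : ℂ) (hx : x ≠ 0)
    (hbranch : P (sq * x) * P (sq * x⁻¹) = qp)
    (h1 : jTheta (q ^ (2 * N)) (x ^ 2) ≠ 0)
    (h2 : jTheta (q ^ (2 * N)) (x⁻¹ ^ 2) ≠ 0)
    (h3 : jTheta (q ^ (2 * N)) (q ^ 2 * x ^ 2) ≠ 0)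
    (h4 : jTheta (q ^ (2 * N)) (q ^ 2 * x⁻¹ ^ 2) ≠ 0) :
    (tauNP N q P (sq * x))⁻¹ * (tauNP N q P (sq * x⁻¹))⁻¹ =
      q ^ 2 * qp⁻¹ * jTheta (q ^ (2 * N)) (x ^ 2) * jTheta (q ^ (2 * N)) (x⁻¹ ^ 2)
        / (jTheta (q ^ (2 * N)) (q ^ 2 * x ^ 2) * jTheta (q ^ (2 * N)) (q ^ 2 * x⁻¹ ^ 2)) :=
  stmt9_general N q sq hq0 hsq P qp x hx hbranch
end

section
/- Let i, j be integers with 1 ≤ i < j and i + j odd, let q ∈ ℂ∖{0} and r ∈ ℤ with q^{2r} ≠ 1. Let η(u) = min(i, (i+j)/2 − u). Then the finite sum over half-integers u = 1/2, 3/2, …, (i+j)/2 − 1 satisfies: ∑_{u} η(u) · q^{2ur} = ( q^{rj}(q^{ri} − q^{−ri}) − i·(q^{r} − q^{−r}) ) / (q^{r} − q^{−r})². -/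
lemma key16 (x : ℂ) (hx : x ≠ 1) (i m : ℕ) (him : i ≤ m) :
    ∑ t ∈ Finset.range m, ((min i (m - t) : ℕ) : ℂ) * x ^ t
      = (x ^ (m - i + 1) * (x ^ i - 1) - (i : ℂ) * (x - 1)) / (x - 1) ^ 2 := by
  have hx1 : x - 1 ≠ 0 := sub_ne_zero.mpr hx
  have step1 : ∀ t, ((min i (m - t) : ℕ) : ℂ)
      = ∑ k ∈ Finset.range i, if k < m - t then (1 : ℂ) else 0 := by
    intro t
    rw [Finset.sum_boole]
    congr 1
    rw [show (Finset.range i).filter (fun k => k < m - t) = Finset.range (min i (m - t)) by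
      ext k; simp only [Finset.mem_filter, Finset.mem_range]; omega]
    simp
  have e1 : ∑ t ∈ Finset.range m, ((min i (m - t) : ℕ) : ℂ) * x ^ t
      = ∑ k ∈ Finset.range i, ∑ t ∈ Finset.range (m - k), x ^ t := by
    simp only [step1, Finset.sum_mul, ite_mul, one_mul, zero_mul]
    rw [Finset.sum_comm]
    refine Finset.sum_congr rfl fun k hk => ?_
    rw [← Finset.sum_filter]
    congr 1
    ext t; simp only [Finset.mem_filter, Finset.mem_range]; omega
  rw [e1]
  have e2 : ∀ k ∈ Finset.range i, ∑ t ∈ Finset.range (m - k), x ^ t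
      = (x ^ (m - k) - 1) / (x - 1) := fun k _ => geom_sum_eq hx _
  rw [Finset.sum_congr rfl e2]
  have e3 : ∑ k ∈ Finset.range i, x ^ (m - k)
      = x ^ (m - i + 1) * ((x ^ i - 1) / (x - 1)) := by
    rw [← Finset.sum_range_reflect (fun k => x ^ (m - k)) i]
    have : ∀ k ∈ Finset.range i, x ^ (m - (i - 1 - k)) = x ^ (m - i + 1) * x ^ k := by
      intro k hk
      simp only [Finset.mem_range] at hk
      rw [← pow_add]
      congr 1
      omega
    rw [Finset.sum_congr rfl this, ← Finset.mul_sum, geom_sum_eq hx]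
  rw [← Finset.sum_div, Finset.sum_sub_distrib, e3]
  simp only [Finset.sum_const, Finset.card_range, nsmul_eq_mul, mul_one]
  field_simp

/-- For `1 ≤ i < j` with `i+j` odd (written `i+j = 2m+1`), the trapezoidal multiplicity
function `η(u) = min(i, (i+j)/2 − u)` summed against `q^{2ur}` over the half-integers
`u = 1/2, 3/2, …, (i+j)/2 − 1` (parametrized as `u = t + 1/2`, `t = 0,…,m−1`) gives
`∑_u η(u) q^{2ur} = (q^{rj}(q^{ri} − q^{−ri}) − i(q^r − q^{−r}))/(q^r − q^{−r})²`. -/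
theorem stmt16 (i j m : ℕ) (hi : 1 ≤ i) (hij : i < j) (hm : i + j = 2 * m + 1)
    (q : ℂ) (hq : q ≠ 0) (r : ℤ) (hr : q ^ (2 * r) ≠ 1) :
    ∑ t ∈ Finset.range m, ((min i (m - t) : ℕ) : ℂ) * q ^ ((2 * (t : ℤ) + 1) * r)
      = (q ^ (r * (j : ℤ)) * (q ^ (r * (i : ℤ)) - q ^ (-(r * (i : ℤ))))
          - (i : ℂ) * (q ^ r - q ^ (-r)))
        / (q ^ r - q ^ (-r)) ^ 2 := by
  set y : ℂ := q ^ r with hy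
  have hy0 : y ≠ 0 := zpow_ne_zero _ hq
  have hx2 : q ^ (2 * r) = y ^ 2 := by
    rw [mul_comm, zpow_mul, hy, show (2:ℤ) = ((2:ℕ):ℤ) from rfl, zpow_natCast]
  have hx1 : y ^ 2 ≠ 1 := hx2 ▸ hr
  have him : i ≤ m := by omega
  have hlhs : ∀ t : ℕ, q ^ ((2 * (t : ℤ) + 1) * r) = (y ^ 2) ^ t * y := by
    intro t
    rw [show (2 * (t : ℤ) + 1) * r = (2 * r) * (t : ℤ) + r by ring,
      zpow_add₀ hq, zpow_mul, hx2, zpow_natCast]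
  simp only [hlhs]
  have := key16 (y ^ 2) hx1 i m him
  calc ∑ t ∈ Finset.range m, ((min i (m - t) : ℕ) : ℂ) * ((y ^ 2) ^ t * y)
      = (∑ t ∈ Finset.range m, ((min i (m - t) : ℕ) : ℂ) * (y ^ 2) ^ t) * y := by
        rw [Finset.sum_mul]; simp [mul_assoc]
    _ = ((y ^ 2) ^ (m - i + 1) * ((y ^ 2) ^ i - 1) - (i : ℂ) * (y ^ 2 - 1)) / (y ^ 2 - 1) ^ 2 * y := by
        rw [this]
    _ = (q ^ (r * (j : ℤ)) * (q ^ (r * (i : ℤ)) - q ^ (-(r * (i : ℤ))))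
          - (i : ℂ) * (q ^ r - q ^ (-r))) / (q ^ r - q ^ (-r)) ^ 2 := by
        have hji : q ^ (r * (j : ℤ)) = y ^ j := by rw [zpow_mul, hy, zpow_natCast]
        have hii : q ^ (r * (i : ℤ)) = y ^ i := by rw [zpow_mul, hy, zpow_natCast]
        have hni : q ^ (-(r * (i : ℤ))) = (y ^ i)⁻¹ := by rw [zpow_neg, hii]
        have hnr : q ^ (-r) = y⁻¹ := by rw [zpow_neg, hy]
        rw [hji, hii, hni, hnr]
        obtain ⟨a, rfl⟩ : ∃ a, m = a + i := ⟨m - i, by omega⟩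
        have hj : j = 2 * a + i + 1 := by omega
        have hmi : a + i - i + 1 = a + 1 := by omega
        have h21 : y ^ 2 - 1 ≠ 0 := sub_ne_zero.mpr hx1
        have hyy : y - y⁻¹ ≠ 0 := by
          intro h
          apply h21
          have : y * (y - y⁻¹) = y ^ 2 - 1 := by field_simp
          rw [← this, h, mul_zero]
        have hinv1 : y - y⁻¹ = (y ^ 2 - 1) / y := by field_simp
        have hinv2 : y ^ i - (y ^ i)⁻¹ = ((y ^ 2) ^ i - 1) / y ^ i := by
          rw [← pow_mul, mul_comm 2 i, pow_mul]
          field_simp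
        rw [hj, hmi, hinv1, hinv2]
        have hyp : (y : ℂ) ^ i ≠ 0 := pow_ne_zero _ hy0
        field_simp
        ring
end

section
/- Let i, j be integers with 1 ≤ i ≤ j and i + j even, let q ∈ ℂ∖{0} and r ∈ ℤ with q^{2r} ≠ 1. Let η(u) = min(i, (i+j)/2 − u). Then: ∑_{u=1}^{(i+j)/2 − 1} η(u) · q^{2ur} = ( q^{rj}(q^{ri} − q^{−ri}) − i·q^{r}·(q^{r} − q^{−r}) ) / (q^{r} − q^{−r})². -/
private lemma geom_aux (Q : ℂ) (n : ℕ) :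
    (Q - 1) * ∑ u ∈ Finset.Icc 1 n, Q ^ u = Q ^ (n + 1) - Q := by
  induction n with
  | zero => simp
  | succ n ih =>
      rw [Finset.sum_Icc_succ_top (by omega)]
      ring_nf
      ring_nf at ih
      linear_combination ih

private lemma key_aux (Q : ℂ) (i m : ℕ) (him : i ≤ m) :
    (Q - 1) ^ 2 * ∑ u ∈ Finset.Icc 1 (m - 1), ((min i (m - u) : ℕ) : ℂ) * Q ^ u
      = Q ^ (m + 1) - Q ^ (m - i + 1) - (i : ℂ) * Q * (Q - 1) := by
  induction i with
  | zero => simp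
  | succ i ih =>
      have him' : i ≤ m := by omega
      have hsplit : ∑ u ∈ Finset.Icc 1 (m - 1), ((min (i+1) (m - u) : ℕ) : ℂ) * Q ^ u
          = (∑ u ∈ Finset.Icc 1 (m - 1), ((min i (m - u) : ℕ) : ℂ) * Q ^ u)
            + ∑ u ∈ Finset.Icc 1 (m - 1 - i), Q ^ u := by
        have h1 : ∀ u ∈ Finset.Icc 1 (m - 1),
            ((min (i+1) (m - u) : ℕ) : ℂ) * Q ^ u
              = ((min i (m - u) : ℕ) : ℂ) * Q ^ u
                + (if u ∈ Finset.Icc 1 (m - 1 - i) then Q ^ u else 0) := by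
          intro u hu
          simp only [Finset.mem_Icc] at hu ⊢
          by_cases h : u ≤ m - 1 - i
          · have : min (i+1) (m - u) = min i (m - u) + 1 := by omega
            rw [this, if_pos ⟨hu.1, h⟩]
            push_cast
            ring
          · have : min (i+1) (m - u) = min i (m - u) := by omega
            rw [this, if_neg (by omega)]
            ring
        rw [Finset.sum_congr rfl h1, Finset.sum_add_distrib, Finset.sum_ite_mem,
          Finset.inter_eq_right.mpr (Finset.Icc_subset_Icc le_rfl (by omega))]
      rw [hsplit]
      have hG := geom_aux Q (m - 1 - i)
      have e1 : m - 1 - i + 1 = m - i := by omega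
      have e2 : m - (i + 1) + 1 = m - i := by omega
      rw [e1] at hG
      rw [e2]
      push_cast
      linear_combination ih him' + (Q - 1) * hG

/-- For `1 ≤ i ≤ j` with `i+j` even (written `i+j = 2m`), the trapezoidal multiplicity
function `η(u) = min(i, (i+j)/2 − u)` summed against `q^{2ur}` over the integers
`u = 1, …, (i+j)/2 − 1` gives
`∑_u η(u) q^{2ur} = (q^{rj}(q^{ri} − q^{−ri}) − i q^r (q^r − q^{−r}))/(q^r − q^{−r})²`. -/
theorem stmt17 (i j m : ℕ) (hi : 1 ≤ i) (hij : i ≤ j) (hm : i + j = 2 * m)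
    (q : ℂ) (hq : q ≠ 0) (r : ℤ) (hr : q ^ (2 * r) ≠ 1) :
    ∑ u ∈ Finset.Icc 1 (m - 1), ((min i (m - u) : ℕ) : ℂ) * q ^ (2 * (u : ℤ) * r)
      = (q ^ (r * (j : ℤ)) * (q ^ (r * (i : ℤ)) - q ^ (-(r * (i : ℤ))))
          - (i : ℂ) * q ^ r * (q ^ r - q ^ (-r)))
        / (q ^ r - q ^ (-r)) ^ 2 := by
  have him : i ≤ m := by omega
  have hs : q ^ r ≠ 0 := zpow_ne_zero r hq
  have hQ : q ^ (2 * r) = (q ^ r) ^ 2 := by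
    rw [two_mul, zpow_add₀ hq, sq]
  have hexp : ∀ u : ℕ, q ^ (2 * (u : ℤ) * r) = ((q ^ r) ^ 2) ^ u := by
    intro u
    rw [← hQ, show 2 * (u:ℤ) * r = (2 * r) * (u:ℤ) by ring, zpow_mul, zpow_natCast]
  have hI : q ^ (r * (i : ℤ)) = (q ^ r) ^ i := by rw [zpow_mul, zpow_natCast]
  have hnI : q ^ (-(r * (i : ℤ))) = ((q ^ r) ^ i)⁻¹ := by rw [zpow_neg, hI]
  have hJ : q ^ (r * (j : ℤ)) = (q ^ r) ^ j := by rw [zpow_mul, zpow_natCast]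
  have hnr : q ^ (-r) = (q ^ r)⁻¹ := by rw [zpow_neg]
  simp only [hexp, hI, hnI, hJ, hnr]
  set s := q ^ r with hs_def
  have hQ1 : s ^ 2 ≠ 1 := by rw [← hQ]; exact hr
  have hden : s - s⁻¹ ≠ 0 := by
    intro h
    apply hQ1
    rw [sq]
    nth_rewrite 2 [sub_eq_zero.mp h]
    exact mul_inv_cancel₀ hs
  rw [eq_div_iff (pow_ne_zero 2 hden)]
  apply mul_right_cancel₀ (pow_ne_zero 2 hs)
  have hkey := key_aux (s ^ 2) i m him
  have hss : (s - s⁻¹) * s = s ^ 2 - 1 := by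
    rw [sub_mul, inv_mul_cancel₀ hs, sq]
  have hji : s ^ (j - i) * s ^ i = s ^ j := by rw [← pow_add]; congr 1; omega
  have hji' : s ^ j * (s ^ i)⁻¹ = s ^ (j - i) := by
    rw [← hji, mul_assoc, mul_inv_cancel₀ (pow_ne_zero i hs), mul_one]
  have eA : (s ^ 2) ^ (m + 1) = s ^ i * s ^ j * s ^ 2 := by
    rw [← pow_mul, ← pow_add, ← pow_add]; congr 1; omega
  have eB : (s ^ 2) ^ (m - i + 1) = s ^ (j - i) * s ^ 2 := by
    rw [← pow_mul, ← pow_add]; congr 1; omega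
  have L : (∑ u ∈ Finset.Icc 1 (m - 1), ((min i (m - u) : ℕ) : ℂ) * (s ^ 2) ^ u)
      * (s - s⁻¹) ^ 2 * s ^ 2
      = ((s - s⁻¹) * s) ^ 2
        * ∑ u ∈ Finset.Icc 1 (m - 1), ((min i (m - u) : ℕ) : ℂ) * (s ^ 2) ^ u := by
    ring
  rw [L, hss, hkey, eA, eB]
  linear_combination (s^2) * hji' + (i:ℂ) * s^2 * hss
end

section
/- Let 0 ≤ r₁ < ρ < r₂ and α ∈ ℂ with |α|^{−1/2} = ρ. Let f be a meromorphic function on the annulus A = {x ∈ ℂ : r₁ < |x| < r₂} of the form f(x) = g(x²) for a meromorphic function g, whose only singularities in A are simple poles at the two points x = ±α^{−1/2} (for some fixed square root α^{−1/2}). Let c_l (l ∈ ℤ) be the coefficients of x^{2l} in the Laurent expansion of f valid on {r₁ < |x| < ρ}, and c'_l those of the Laurent expansion valid on {ρ < |x| < r₂}. Then for every l ∈ ℤ: c'_l − c_l = − α^{l} · [ (1 − α x²) f(x) ] evaluated at x = α^{−1/2} (equivalently, at x² = α^{−1}). -/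
/-!
In the variable `w = x²`, subtracting the principal part `G(α⁻¹) / (1 - α w)` from `f` leaves
`-α⁻¹ · dslope G α⁻¹ w`, which is holomorphic on the whole annulus. By Cauchy's theorem its Laurent
coefficients, extracted as circle integrals, are the same on both sides of the pole, so the jump
of the coefficients of `f` is `G(α⁻¹)` times the jump between the two Laurent expansions of
`1 / (1 - α w)`:
`∑_{m ≥ 0} α^m w^m` inside the circle `|w| = |α⁻¹|` and `-∑_{m < 0} α^m w^m` outside it.
-/

open Complex Metric Set Real

theorem hasSum_circleIntegral_of_norm_le {E ι : Type*} [NormedAddCommGroup E] [NormedSpace ℂ E]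
    [Countable ι] {f : ι → ℂ → E} {F : ℂ → E} {c : ℂ} {R : ℝ} {b : ι → ℝ}
    (hf : ∀ i, CircleIntegrable (f i) c R) (hb : ∀ i, ∀ z ∈ sphere c |R|, ‖f i z‖ ≤ b i)
    (hb_sum : Summable b) (hF : ∀ z ∈ sphere c |R|, HasSum (fun i => f i z) (F z)) :
    HasSum (fun i => ∮ z in C(c, R), f i z) (∮ z in C(c, R), F z) := by
  refine intervalIntegral.hasSum_integral_of_dominated_convergence (fun i _ => |R| * b i)
    (fun i => (hf i).out.def'.aestronglyMeasurable) (fun i => ?_) ?_ intervalIntegrable_const ?_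
  · refine .of_forall fun θ _ => ?_
    rw [norm_smul, deriv_circleMap, norm_mul, norm_circleMap_zero, norm_I, mul_one]
    exact mul_le_mul_of_nonneg_left (hb i _ (circleMap_mem_sphere' c R θ)) (abs_nonneg R)
  · exact .of_forall fun _ _ => hb_sum.mul_left _
  · exact .of_forall fun θ _ => (hF _ (circleMap_mem_sphere' c R θ)).const_smul _

theorem circleIntegral_mul_sub_zpow_of_hasSum {F : ℂ → ℂ} {a : ℤ → ℂ} {c : ℂ} {R : ℝ}
    (hR : 0 < R) (h : ∀ z ∈ sphere c R, HasSum (fun m => a m * (z - c) ^ m) (F z)) (n : ℤ) :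
    (∮ z in C(c, R), F z * (z - c) ^ (-n - 1)) = 2 * π * I * a n := by
  have hsphere : ∀ z ∈ sphere c R, z - c ≠ 0 := fun z hz =>
    sub_ne_zero.2 (ne_of_mem_sphere hz hR.ne')
  have hsum : Summable fun m => ‖a m‖ * R ^ m := by
    have := (summable_norm_iff.2 (h (c + R) (by simp [abs_of_pos hR])).summable)
    simpa [norm_zpow, abs_of_pos hR] using this
  have hintegrable (m : ℤ) : CircleIntegrable (fun z => a m * (z - c) ^ (m + (-n - 1))) c R :=
    (continuousOn_const.mul ((continuousOn_id.sub continuousOn_const).zpow₀ _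
      fun z hz => Or.inl (hsphere z hz))).circleIntegrable hR.le
  have hbound (m : ℤ) : ∀ z ∈ sphere c |R|,
      ‖a m * (z - c) ^ (m + (-n - 1))‖ ≤ ‖a m‖ * R ^ m * R ^ (-n - 1) := fun z hz => by
    rw [abs_of_pos hR] at hz
    rw [norm_mul, norm_zpow, mem_sphere_iff_norm.1 hz, zpow_add₀ hR.ne', mul_assoc]
  have hseries : ∀ z ∈ sphere c |R|, HasSum (fun m => a m * (z - c) ^ (m + (-n - 1)))
      (F z * (z - c) ^ (-n - 1)) := fun z hz => by
    rw [abs_of_pos hR] at hz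
    simpa only [mul_assoc, zpow_add₀ (hsphere z hz)] using (h z hz).mul_right ((z - c) ^ (-n - 1))
  refine (hasSum_circleIntegral_of_norm_le hintegrable hbound (hsum.mul_right _) hseries).unique ?_
  refine (hasSum_ite_eq n (2 * π * I * a n)).congr_fun fun m => ?_
  rw [circleIntegral.integral_const_mul]
  split_ifs with hm
  · subst hm
    simp only [show m + (-m - 1) = -1 by ring, zpow_neg_one]
    rw [circleIntegral.integral_sub_inv_of_mem_ball (mem_ball_self hR)]
    ring
  · rw [circleIntegral.integral_sub_zpow_of_ne (by omega), mul_zero]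

theorem laurent_coeff_eq_of_differentiableOn_annulus {F : ℂ → ℂ} {a b : ℤ → ℂ} {c : ℂ}
    {r R : ℝ} (hr : 0 < r) (hrR : r ≤ R) (hF : DifferentiableOn ℂ F (closedBall c R \ ball c r))
    (ha : ∀ z ∈ sphere c r, HasSum (fun m => a m * (z - c) ^ m) (F z))
    (hb : ∀ z ∈ sphere c R, HasSum (fun m => b m * (z - c) ^ m) (F z)) : a = b := by
  funext n
  have hintegrand : DifferentiableOn ℂ (fun z => F z * (z - c) ^ (-n - 1))
      (closedBall c R \ ball c r) :=
    hF.mul <| (differentiableOn_id.sub_const c).zpow <| .inl fun z hz =>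
      sub_ne_zero.2 (ne_of_mem_of_not_mem (mem_ball_self hr) hz.2).symm
  have hopen : ball c R \ closedBall c r ⊆ closedBall c R \ ball c r :=
    sdiff_subset_sdiff ball_subset_closedBall ball_subset_closedBall
  have hcauchy := circleIntegral_eq_of_differentiable_on_annulus_off_countable hr hrR
    countable_empty hintegrand.continuousOn fun z hz =>
      hintegrand.differentiableAt (Filter.mem_of_superset
        ((isOpen_ball.sdiff isClosed_closedBall).mem_nhds hz.1) hopen)
  rw [circleIntegral_mul_sub_zpow_of_hasSum (hr.trans_le hrR) hb,
    circleIntegral_mul_sub_zpow_of_hasSum hr ha] at hcauchy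
  exact (mul_left_cancel₀ two_pi_I_ne_zero hcauchy).symm

theorem hasSum_inv_one_sub_mul_of_norm_lt_one {α w : ℂ} (h : ‖α * w‖ < 1) :
    HasSum (fun m : ℤ => (if 0 ≤ m then α ^ m else 0) * w ^ m) (1 - α * w)⁻¹ := by
  have hnat : HasSum (fun n : ℕ => (if 0 ≤ (n : ℤ) then α ^ (n : ℤ) else 0) * w ^ (n : ℤ))
      (1 - α * w)⁻¹ :=
    (hasSum_geometric_of_norm_lt_one h).congr_fun fun n => by simp [mul_pow]
  have hneg : HasSum (fun n : ℕ =>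
      (if 0 ≤ -((n : ℤ) + 1) then α ^ (-((n : ℤ) + 1)) else 0) * w ^ (-((n : ℤ) + 1))) 0 :=
    hasSum_zero.congr_fun fun n => by rw [if_neg (by omega), zero_mul]
  simpa only [add_zero] using HasSum.of_nat_of_neg_add_one
    (f := fun m : ℤ => (if 0 ≤ m then α ^ m else 0) * w ^ m) hnat hneg

theorem hasSum_inv_one_sub_mul_of_one_lt_norm {α w : ℂ} (h : 1 < ‖α * w‖) :
    HasSum (fun m : ℤ => (if m < 0 then -α ^ m else 0) * w ^ m) (1 - α * w)⁻¹ := by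
  set u := α * w
  have hu : u ≠ 0 := norm_pos_iff.1 (one_pos.trans h)
  have hinv : ‖u⁻¹‖ < 1 := by rw [norm_inv]; exact inv_lt_one_of_one_lt₀ h
  have hnat : HasSum (fun n : ℕ => (if (n : ℤ) < 0 then -α ^ (n : ℤ) else 0) * w ^ (n : ℤ)) 0 :=
    hasSum_zero.congr_fun fun n => by rw [if_neg (by omega), zero_mul]
  have hneg : HasSum (fun n : ℕ =>
      (if -((n : ℤ) + 1) < 0 then -α ^ (-((n : ℤ) + 1)) else 0) * w ^ (-((n : ℤ) + 1)))
      (-u⁻¹ * (1 - u⁻¹)⁻¹) :=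
    ((hasSum_geometric_of_norm_lt_one hinv).mul_left (-u⁻¹)).congr_fun fun n => by
      rw [if_pos (by omega), neg_mul, ← mul_zpow, zpow_neg]
      norm_cast
      rw [pow_succ', mul_inv, inv_pow, neg_mul]
  have hsum : -u⁻¹ * (1 - u⁻¹)⁻¹ = (1 - u)⁻¹ := by
    rw [neg_mul, ← mul_inv, mul_sub, mul_one, mul_inv_cancel₀ hu, ← inv_neg, neg_sub]
  simpa only [zero_add, hsum] using HasSum.of_nat_of_neg_add_one
    (f := fun m : ℤ => (if m < 0 then -α ^ m else 0) * w ^ m) hnat hneg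

theorem hasSum_zpow_of_hasSum_two_mul {a : ℤ → ℂ} {F : ℂ → ℂ} {r R : ℝ} (hR : 0 ≤ R)
    (h : ∀ x : ℂ, r < ‖x‖ → ‖x‖ < R → HasSum (fun m => a m * x ^ (2 * m)) (F (x ^ 2)))
    {w : ℂ} (hw₁ : r ^ 2 < ‖w‖) (hw₂ : ‖w‖ < R ^ 2) : HasSum (fun m => a m * w ^ m) (F w) := by
  obtain ⟨x, rfl⟩ := IsAlgClosed.exists_pow_nat_eq w two_pos
  rw [norm_pow] at hw₁ hw₂
  have hx₁ := lt_of_pow_lt_pow_left₀ 2 (norm_nonneg x) hw₁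
  have hx₂ := lt_of_pow_lt_pow_left₀ 2 hR hw₂
  simpa [zpow_mul] using h x hx₁ hx₂

theorem div_one_sub_mul_eq_sub_dslope {𝕜 : Type*} [NontriviallyNormedField 𝕜] {G : 𝕜 → 𝕜}
    {α w : 𝕜} (hα : α ≠ 0) (hw : w ≠ α⁻¹) :
    G w / (1 - α * w) = G α⁻¹ * (1 - α * w)⁻¹ - α⁻¹ * dslope G α⁻¹ w := by
  have hsub : w - α⁻¹ = -(1 - α * w) * α⁻¹ := by field_simp; ring
  rw [dslope_of_ne G hw, slope_def_field, hsub, div_eq_mul_inv, div_eq_mul_inv, mul_inv, inv_inv,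
    inv_neg]
  linear_combination -(G w - G α⁻¹) * (1 - α * w)⁻¹ * inv_mul_cancel₀ hα

theorem laurent_coeff_sub_eq_of_simple_pole {α : ℂ} {G : ℂ → ℂ} {c c' : ℤ → ℂ} {r R : ℝ}
    (hr : 0 < r) (hrα : r < ‖α⁻¹‖) (hαR : ‖α⁻¹‖ < R)
    (hG : DifferentiableOn ℂ G (closedBall 0 R \ ball 0 r))
    (hc : ∀ w ∈ sphere (0 : ℂ) r, HasSum (fun m => c m * w ^ m) (G w / (1 - α * w)))
    (hc' : ∀ w ∈ sphere (0 : ℂ) R, HasSum (fun m => c' m * w ^ m) (G w / (1 - α * w)))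
    (l : ℤ) : c' l - c l = -α ^ l * G α⁻¹ := by
  have hα : α ≠ 0 := by rintro rfl; simp at hrα; linarith
  have hnhds : closedBall 0 R \ ball 0 r ∈ nhds α⁻¹ :=
    Filter.mem_of_superset ((isOpen_ball.sdiff isClosed_closedBall).mem_nhds
      ⟨mem_ball_zero_iff.2 hαR, fun h => (mem_closedBall_zero_iff.1 h).not_gt hrα⟩)
      (sdiff_subset_sdiff ball_subset_closedBall ball_subset_closedBall)
  have hregular : DifferentiableOn ℂ (fun w => -(α⁻¹ * dslope G α⁻¹ w))
      (closedBall 0 R \ ball 0 r) :=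
    (((differentiableOn_dslope hnhds).2 hG).const_mul _).neg
  have hnorm (w : ℂ) : ‖α * w‖ = ‖w‖ / ‖α⁻¹‖ := by
    rw [norm_mul, norm_inv, div_inv_eq_mul, mul_comm]
  have hexpand {a e : ℤ → ℂ} {w : ℂ} (hw : ‖w‖ ≠ ‖α⁻¹‖)
      (ha : HasSum (fun m => a m * w ^ m) (G w / (1 - α * w)))
      (he : HasSum (fun m => e m * w ^ m) (1 - α * w)⁻¹) :
      HasSum (fun m => (a m - G α⁻¹ * e m) * (w - 0) ^ m) (-(α⁻¹ * dslope G α⁻¹ w)) := by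
    rw [div_one_sub_mul_eq_sub_dslope hα (fun h => hw (h ▸ rfl))] at ha
    simpa [sub_mul, mul_assoc] using ha.sub (he.mul_left (G α⁻¹))
  have hcoeff := congrFun (laurent_coeff_eq_of_differentiableOn_annulus hr (hrα.trans hαR).le
    hregular
    (fun w hw => hexpand (by rw [mem_sphere_zero_iff_norm.1 hw]; exact hrα.ne) (hc w hw)
      (hasSum_inv_one_sub_mul_of_norm_lt_one (by
        rwa [hnorm, mem_sphere_zero_iff_norm.1 hw, div_lt_one (hr.trans hrα)])))
    (fun w hw => hexpand (by rw [mem_sphere_zero_iff_norm.1 hw]; exact hαR.ne') (hc' w hw)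
      (hasSum_inv_one_sub_mul_of_one_lt_norm (by
        rwa [hnorm, mem_sphere_zero_iff_norm.1 hw, one_lt_div (hr.trans hrα)])))) l
  by_cases hl : 0 ≤ l
  · rw [if_pos hl, if_neg (not_lt.2 hl)] at hcoeff
    linear_combination -hcoeff
  · rw [if_neg hl, if_pos (not_le.1 hl)] at hcoeff
    linear_combination -hcoeff

/-- Coefficient-jump formula across a simple pole: if `f(x) = G(x²)/(1 − αx²)` with `G`
analytic on the annulus `{r₁² < |w| < r₂²}`, so that the only singularities of `f` on
`{r₁ < |x| < r₂}` are the (at most) simple poles `x = ±α^{−1/2}` of modulus `ρ`, and if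
`c`, `c'` are the Laurent coefficients of `f` in powers `x^{2l}` on the inner annulus
`{r₁ < |x| < ρ}` and the outer annulus `{ρ < |x| < r₂}` respectively, then
`c'_l − c_l = −α^l · [(1 − αx²) f(x)]|_{x² = α⁻¹} = −α^l G(α⁻¹)`. -/
theorem stmt18 (r₁ ρ r₂ : ℝ) (h0 : 0 ≤ r₁) (h1 : r₁ < ρ) (h2 : ρ < r₂)
    (α : ℂ) (hα : ‖α‖ ^ (-(1 : ℝ) / 2) = ρ)
    (f G : ℂ → ℂ)
    (hG : AnalyticOnNhd ℂ G {w : ℂ | r₁ ^ 2 < ‖w‖ ∧ ‖w‖ < r₂ ^ 2})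
    (hf : ∀ x : ℂ, r₁ < ‖x‖ → ‖x‖ < r₂ → x ^ 2 ≠ α⁻¹ →
      f x = G (x ^ 2) / (1 - α * x ^ 2))
    (c c' : ℤ → ℂ)
    (hc : ∀ x : ℂ, r₁ < ‖x‖ → ‖x‖ < ρ →
      HasSum (fun l : ℤ => c l * x ^ (2 * l)) (f x))
    (hc' : ∀ x : ℂ, ρ < ‖x‖ → ‖x‖ < r₂ →
      HasSum (fun l : ℤ => c' l * x ^ (2 * l)) (f x))
    (l : ℤ) :
    c' l - c l = -α ^ l * G α⁻¹ := by
  have hρ : 0 < ρ := h0.trans_lt h1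
  have hpole : ‖α⁻¹‖ = ρ ^ 2 := by
    rw [← hα, ← Real.rpow_natCast, ← Real.rpow_mul (norm_nonneg _), norm_inv]
    norm_num
    exact (Real.rpow_neg_one _).symm
  have hf' (x : ℂ) (hx₁ : r₁ < ‖x‖) (hx₂ : ‖x‖ < r₂) (hx : ‖x‖ ≠ ρ) :
      f x = G (x ^ 2) / (1 - α * x ^ 2) :=
    hf x hx₁ hx₂ fun h => hx (by
      rw [← pow_left_inj₀ (norm_nonneg x) hρ.le two_ne_zero, ← norm_pow, h, hpole])
  obtain ⟨s₁, hr₁s₁, hs₁ρ⟩ := exists_between (pow_lt_pow_left₀ h1 h0 two_ne_zero)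
  obtain ⟨s₂, hρs₂, hs₂r₂⟩ := exists_between (pow_lt_pow_left₀ h2 hρ.le two_ne_zero)
  refine laurent_coeff_sub_eq_of_simple_pole ((pow_nonneg h0 2).trans_lt hr₁s₁)
    (hpole ▸ hs₁ρ) (hpole ▸ hρs₂) (hG.differentiableOn.mono fun w hw => ?_)
    (fun w hw => ?_) (fun w hw => ?_) l
  · rw [mem_sdiff, mem_closedBall_zero_iff, mem_ball_zero_iff, not_lt] at hw
    exact ⟨hr₁s₁.trans_le hw.2, hw.1.trans_lt hs₂r₂⟩
  · rw [mem_sphere_zero_iff_norm] at hw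
    refine hasSum_zpow_of_hasSum_two_mul (F := fun w => G w / (1 - α * w)) hρ.le
      (fun x hx₁ hx₂ => ?_) (by rwa [hw]) (by rwa [hw])
    rw [← hf' x hx₁ (hx₂.trans h2) hx₂.ne]
    exact hc x hx₁ hx₂
  · rw [mem_sphere_zero_iff_norm] at hw
    refine hasSum_zpow_of_hasSum_two_mul (F := fun w => G w / (1 - α * w)) (hρ.trans h2).le
      (fun x hx₁ hx₂ => ?_) (by rwa [hw]) (by rwa [hw])
    rw [← hf' x (h1.trans hx₁) hx₂ hx₁.ne']
    exact hc' x hx₁ hx₂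
end

section
/- Let 0 ≤ r₁ < ρ < r₂ and α ∈ ℂ with |α|^{−1/2} = ρ. Let f be a meromorphic function on the annulus A = {x ∈ ℂ : r₁ < |x| < r₂} of the form f(x) = g(x²) for a meromorphic function g, whose only singularities in A are double poles at the two points x = ±α^{−1/2} (for some fixed square root α^{−1/2}). Let c_l (l ∈ ℤ) be the coefficients of x^{2l} in the Laurent expansion of f valid on {r₁ < |x| < ρ}, and c'_l those of the Laurent expansion valid on {ρ < |x| < r₂}. Then for every l ∈ ℤ: c'_l − c_l = − (l+1) · α^{l} · [ (1 − α x²)² f(x) ]|_{x = α^{−1/2}} + (1/2) · α^{l} · α^{−1/2} · ( d/dx [ (1 − α x²)² f(x) ] )|_{x = α^{−1/2}}, where the same determination α^{−1/2} is used throughout. -/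
/-!
Substituting `w = x ^ 2` turns both expansions into Laurent expansions of
`F w = G w / (1 - α w) ^ 2` on the annuli inside and outside `‖w‖ = ‖α⁻¹‖`. Subtracting the
principal part `G α⁻¹ / (1 - α w) ^ 2 - α⁻¹ G'(α⁻¹) / (1 - α w)` leaves a function that is
holomorphic across that circle, so by Cauchy's theorem on an annulus its Laurent coefficients do
not depend on the radius. The jump `c' - c` is therefore the difference between the outer and the
inner geometric expansions of the principal part.
-/

open Complex Real Metric

theorem circleIntegral_zpow_sub_sub_one {s : ℝ} (hs : 0 < s) (m n : ℤ) :
    (∮ z in C(0, s), z ^ (m - n - 1)) = if m = n then 2 * π * I else 0 := by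
  split_ifs with hmn
  · subst hmn
    simpa [zpow_neg_one] using
      circleIntegral.integral_sub_inv_of_mem_ball (c := 0) (w := 0) (Metric.mem_ball_self hs)
  · simpa using circleIntegral.integral_sub_zpow_of_ne (n := m - n - 1) (by omega) 0 0 s

theorem two_pi_I_mul_coeff_eq_circleIntegral {s : ℝ} (hs : 0 < s) {a : ℤ → ℂ} {g : ℂ → ℂ}
    (h : ∀ w : ℂ, ‖w‖ = s → HasSum (fun m ↦ a m * w ^ m) (g w)) (n : ℤ) :
    2 * π * I * a n = ∮ z in C(0, s), z ^ (-n - 1) * g z := by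
  have hnorm : ∀ θ : ℝ, ‖circleMap 0 s θ‖ = s := fun θ ↦ by
    rw [norm_circleMap_zero, abs_of_pos hs]
  have hne : ∀ θ : ℝ, circleMap 0 s θ ≠ 0 := fun _ ↦ circleMap_ne_center hs.ne'
  have hshift : ∀ z : ℂ, z ≠ 0 → ∀ m : ℤ,
      z ^ (-n - 1) * (a m * z ^ m) = a m * z ^ (m - n - 1) := fun z hz m ↦ by
    rw [mul_left_comm, ← zpow_add₀ hz]
    ring_nf
  have hsummable : Summable fun m ↦ ‖a m‖ * s ^ m := by
    have := summable_norm_iff.mpr (h s (by simp [abs_of_pos hs])).summable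
    simpa [norm_zpow, abs_of_pos hs] using this
  have hterms : HasSum (fun m ↦ ∮ z in C(0, s), a m * z ^ (m - n - 1))
      (∮ z in C(0, s), z ^ (-n - 1) * g z) := by
    refine intervalIntegral.hasSum_integral_of_dominated_convergence
      (fun m _ ↦ s * s ^ (-n - 1) * (‖a m‖ * s ^ m)) (fun m ↦ ?_) (fun m ↦ ?_)
      (.of_forall fun _ _ ↦ hsummable.mul_left _) intervalIntegrable_const
      (.of_forall fun θ _ ↦ ?_)
    · refine Continuous.aestronglyMeasurable ?_
      simp only [deriv_circleMap, smul_eq_mul]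
      exact ((continuous_circleMap 0 s).mul continuous_const).mul
        (continuous_const.mul ((continuous_circleMap 0 s).zpow₀ _ fun θ ↦ Or.inl (hne θ)))
    · refine .of_forall fun θ _ ↦ le_of_eq ?_
      rw [smul_eq_mul, norm_mul, norm_mul, deriv_circleMap, norm_mul, norm_zpow, hnorm,
        Complex.norm_I, mul_one, show m - n - 1 = -n - 1 + m by ring, zpow_add₀ hs.ne']
      ring
    · simp only [smul_eq_mul, ← hshift _ (hne θ)]
      exact ((h _ (hnorm θ)).mul_left _).mul_left _
  have hcoeff : (fun m ↦ ∮ z in C(0, s), a m * z ^ (m - n - 1))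
      = fun m ↦ if m = n then 2 * π * I * a n else 0 := by
    ext m
    rw [circleIntegral.integral_const_mul, circleIntegral_zpow_sub_sub_one hs]
    split_ifs with hmn
    · rw [hmn, mul_comm]
    · rw [mul_zero]
  rw [hcoeff] at hterms
  exact (hasSum_ite_eq n _).unique hterms

theorem laurent_coeff_eq_of_differentiableAt_annulus {s t : ℝ} (hs : 0 < s) (hst : s ≤ t) {g : ℂ → ℂ}
    (hg : ∀ w : ℂ, s ≤ ‖w‖ → ‖w‖ ≤ t → DifferentiableAt ℂ g w) {a b : ℤ → ℂ}
    (ha : ∀ w : ℂ, ‖w‖ = s → HasSum (fun m ↦ a m * w ^ m) (g w))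
    (hb : ∀ w : ℂ, ‖w‖ = t → HasSum (fun m ↦ b m * w ^ m) (g w)) : a = b := by
  ext n
  have hint : (∮ z in C(0, t), z ^ (-n - 1) * g z) = ∮ z in C(0, s), z ^ (-n - 1) * g z := by
    have hdiff : ∀ z : ℂ, s ≤ ‖z‖ → ‖z‖ ≤ t → DifferentiableAt ℂ (fun z ↦ z ^ (-n - 1) * g z) z :=
      fun z hsz hzt ↦ ((differentiableAt_zpow.mpr (Or.inl (norm_pos_iff.mp (hs.trans_le hsz)))).mul
        (hg z hsz hzt))
    refine circleIntegral_eq_of_differentiable_on_annulus_off_countable hs hst Set.countable_empty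
      (fun z hz ↦ ?_) (fun z hz ↦ ?_)
    · simp only [Set.mem_sdiff, mem_closedBall_zero_iff, mem_ball_zero_iff, not_lt] at hz
      exact (hdiff z hz.2 hz.1).continuousAt.continuousWithinAt
    · simp only [Set.mem_sdiff, mem_closedBall_zero_iff, mem_ball_zero_iff, not_le] at hz
      exact hdiff z hz.1.2.le hz.1.1.le
  have h2πI : 2 * π * I ≠ 0 := by simp [pi_ne_zero, I_ne_zero]
  apply mul_left_cancel₀ h2πI
  rw [two_pi_I_mul_coeff_eq_circleIntegral hs ha,
    two_pi_I_mul_coeff_eq_circleIntegral (hs.trans_le hst) hb, hint]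

theorem hasSum_principalPart_of_norm_lt_one (A B α w : ℂ) (hu : ‖α * w‖ < 1) :
    HasSum (fun m : ℤ ↦ (if 0 ≤ m then (A * (m + 1) + B) * α ^ m else 0) * w ^ m)
      (A / (1 - α * w) ^ 2 + B / (1 - α * w)) := by
  set u := α * w
  have h1u : 1 - u ≠ 0 := sub_ne_zero.mpr fun h ↦ by simp [← h] at hu
  have hnat : HasSum (fun k : ℕ ↦ (A * (k + 1) + B) * u ^ k) (A / (1 - u) ^ 2 + B / (1 - u)) := by
    have hval : A / (1 - u) ^ 2 + B / (1 - u) = A * (u / (1 - u) ^ 2) + (A + B) * (1 - u)⁻¹ := by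
      field_simp; ring
    rw [hval]
    exact (((hasSum_coe_mul_geometric_of_norm_lt_one hu).mul_left A).add
      ((hasSum_geometric_of_norm_lt_one hu).mul_left (A + B))).congr_fun fun k ↦ by ring
  rw [← add_zero (A / _ + _)]
  refine .of_nat_of_neg_add_one (hnat.congr_fun fun k ↦ ?_) (hasSum_zero.congr_fun fun k ↦ ?_)
  · rw [if_pos (Nat.cast_nonneg k), zpow_natCast, zpow_natCast, mul_pow]
    push_cast
    ring
  · rw [if_neg (by omega), zero_mul]

theorem hasSum_principalPart_of_one_lt_norm (A B α w : ℂ) (hu : 1 < ‖α * w‖) :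
    HasSum (fun m : ℤ ↦ (if m < 0 then -((A * (m + 1) + B) * α ^ m) else 0) * w ^ m)
      (A / (1 - α * w) ^ 2 + B / (1 - α * w)) := by
  set u := α * w
  have hu0 : u ≠ 0 := norm_pos_iff.1 (zero_lt_one.trans hu)
  have hv : ‖u⁻¹‖ < 1 := by rw [norm_inv]; exact inv_lt_one_of_one_lt₀ hu
  have h1u : 1 - u ≠ 0 := sub_ne_zero.mpr fun h ↦ by simp [← h] at hu
  have hu1 : u - 1 ≠ 0 := by rwa [← neg_sub, neg_ne_zero]
  have hneg : HasSum (fun k : ℕ ↦ (A * k - B) * u⁻¹ ^ (k + 1))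
      (A / (1 - u) ^ 2 + B / (1 - u)) := by
    have hval : A / (1 - u) ^ 2 + B / (1 - u)
        = A * u⁻¹ * (u⁻¹ / (1 - u⁻¹) ^ 2) - B * u⁻¹ * (1 - u⁻¹)⁻¹ := by
      rw [show 1 - u⁻¹ = (u - 1) / u by field_simp]
      field_simp
      ring
    rw [hval]
    exact (((hasSum_coe_mul_geometric_of_norm_lt_one hv).mul_left (A * u⁻¹)).sub
      ((hasSum_geometric_of_norm_lt_one hv).mul_left (B * u⁻¹))).congr_fun fun k ↦ by ring
  rw [← zero_add (A / _ + _)]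
  refine .of_nat_of_neg_add_one (hasSum_zero.congr_fun fun k ↦ ?_) (hneg.congr_fun fun k ↦ ?_)
  · simp
  · rw [if_pos (by omega), show -((k : ℤ) + 1) = -((k + 1 : ℕ) : ℤ) by push_cast; ring,
      zpow_neg, zpow_neg, zpow_natCast, zpow_natCast, inv_pow]
    simp only [u, mul_pow]
    push_cast
    ring

theorem div_one_sub_mul_sq_sub_principalPart (G : ℂ → ℂ) {α w : ℂ} (hα : α ≠ 0)
    (hw : w ≠ α⁻¹) :
    G w / (1 - α * w) ^ 2 - (G α⁻¹ / (1 - α * w) ^ 2 + -(deriv G α⁻¹ * α⁻¹) / (1 - α * w))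
      = α⁻¹ ^ 2 * dslope (dslope G α⁻¹) α⁻¹ w := by
  have hw' : w - α⁻¹ ≠ 0 := sub_ne_zero.mpr hw
  have h1 : 1 - α * w = -α * (w - α⁻¹) := by field_simp; ring
  rw [dslope_of_ne _ hw, slope_def_field, dslope_same, dslope_of_ne _ hw, slope_def_field, h1]
  generalize w - α⁻¹ = d at hw' ⊢
  field_simp
  ring

theorem laurent_coeff_jump_of_double_pole {R₁ R₂ : ℝ} {α : ℂ} (hα : α ≠ 0)
    (hR₁ : R₁ < ‖α⁻¹‖) (hR₂ : ‖α⁻¹‖ < R₂) {G : ℂ → ℂ}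
    (hG : DifferentiableOn ℂ G {w | R₁ < ‖w‖ ∧ ‖w‖ < R₂}) {c c' : ℤ → ℂ}
    (hc : ∀ w : ℂ, R₁ < ‖w‖ → ‖w‖ < ‖α⁻¹‖ →
      HasSum (fun m ↦ c m * w ^ m) (G w / (1 - α * w) ^ 2))
    (hc' : ∀ w : ℂ, ‖α⁻¹‖ < ‖w‖ → ‖w‖ < R₂ →
      HasSum (fun m ↦ c' m * w ^ m) (G w / (1 - α * w) ^ 2)) (m : ℤ) :
    c' m - c m = -((G α⁻¹ * (m + 1) - deriv G α⁻¹ * α⁻¹) * α ^ m) := by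
  set U := {w : ℂ | R₁ < ‖w‖ ∧ ‖w‖ < R₂}
  have hU : IsOpen U :=
    (isOpen_lt continuous_const continuous_norm).inter (isOpen_lt continuous_norm continuous_const)
  have hreg : DifferentiableOn ℂ (fun w ↦ α⁻¹ ^ 2 * dslope (dslope G α⁻¹) α⁻¹ w) U :=
    have hU₀ : U ∈ nhds α⁻¹ := hU.mem_nhds ⟨hR₁, hR₂⟩
    ((differentiableOn_dslope hU₀).2 ((differentiableOn_dslope hU₀).2 hG)).const_mul _
  have hpos : 0 < ‖α⁻¹‖ := norm_pos_iff.2 (inv_ne_zero hα)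
  have hnorm_mul : ∀ w : ℂ, ‖α * w‖ = ‖w‖ / ‖α⁻¹‖ := fun w ↦ by
    rw [norm_mul, norm_inv, div_inv_eq_mul, mul_comm]
  obtain ⟨s, hR₁s, hsα⟩ := exists_between (max_lt hR₁ hpos)
  obtain ⟨hR₁s, hs⟩ := max_lt_iff.1 hR₁s
  obtain ⟨t, hαt, htR₂⟩ := exists_between hR₂
  set A := G α⁻¹
  set B := -(deriv G α⁻¹ * α⁻¹)
  have hin : ∀ w : ℂ, ‖w‖ = s → HasSum
      (fun m ↦ (c m - if 0 ≤ m then (A * (m + 1) + B) * α ^ m else 0) * w ^ m)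
      (α⁻¹ ^ 2 * dslope (dslope G α⁻¹) α⁻¹ w) := fun w hw ↦ by
    have hsum := (hc w (hw ▸ hR₁s) (hw ▸ hsα)).sub (hasSum_principalPart_of_norm_lt_one A B α w
      (by rw [hnorm_mul, hw, div_lt_one hpos]; exact hsα))
    rw [div_one_sub_mul_sq_sub_principalPart G hα (by rintro rfl; exact hsα.ne' hw)] at hsum
    simpa only [sub_mul] using hsum
  have hout : ∀ w : ℂ, ‖w‖ = t → HasSum
      (fun m ↦ (c' m - if m < 0 then -((A * (m + 1) + B) * α ^ m) else 0) * w ^ m)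
      (α⁻¹ ^ 2 * dslope (dslope G α⁻¹) α⁻¹ w) := fun w hw ↦ by
    have hsum := (hc' w (hw ▸ hαt) (hw ▸ htR₂)).sub (hasSum_principalPart_of_one_lt_norm A B α w
      (by rw [hnorm_mul, hw, one_lt_div hpos]; exact hαt))
    rw [div_one_sub_mul_sq_sub_principalPart G hα (by rintro rfl; exact hαt.ne hw)] at hsum
    simpa only [sub_mul] using hsum
  have hjump := congrFun (laurent_coeff_eq_of_differentiableAt_annulus hs (hsα.trans hαt).le
    (fun w hsw hwt ↦ hreg.differentiableAt (hU.mem_nhds ⟨hR₁s.trans_le hsw, hwt.trans_lt htR₂⟩))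
    hin hout) m
  by_cases h : 0 ≤ m
  · rw [if_pos h, if_neg (not_lt.2 h)] at hjump
    linear_combination -hjump
  · rw [if_neg h, if_pos (not_le.1 h)] at hjump
    linear_combination -hjump

theorem hasSum_zpow_of_hasSum_zpow_two_mul {a b : ℝ} (hb : 0 ≤ b) {c : ℤ → ℂ} {f F : ℂ → ℂ}
    (hfF : ∀ x : ℂ, a < ‖x‖ → ‖x‖ < b → f x = F (x ^ 2))
    (h : ∀ x : ℂ, a < ‖x‖ → ‖x‖ < b → HasSum (fun l ↦ c l * x ^ (2 * l)) (f x))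
    {w : ℂ} (haw : a ^ 2 < ‖w‖) (hwb : ‖w‖ < b ^ 2) : HasSum (fun l ↦ c l * w ^ l) (F w) := by
  obtain ⟨x, rfl⟩ := IsAlgClosed.exists_pow_nat_eq w two_pos
  rw [norm_pow] at haw hwb
  have hax := lt_of_pow_lt_pow_left₀ 2 (norm_nonneg x) haw
  have hxb := lt_of_pow_lt_pow_left₀ 2 hb hwb
  simpa [zpow_mul, hfF x hax hxb] using h x hax hxb

theorem sq_rpow_neg_one_half {x : ℝ} (hx : 0 ≤ x) : (x ^ (-(1 : ℝ) / 2)) ^ 2 = x⁻¹ := by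
  rw [← Real.rpow_natCast, ← Real.rpow_mul hx]
  norm_num [Real.rpow_neg_one]

theorem deriv_comp_sq {G : ℂ → ℂ} {β : ℂ} (hG : DifferentiableAt ℂ G (β ^ 2)) :
    deriv (fun x ↦ G (x ^ 2)) β = deriv G (β ^ 2) * (2 * β) := by
  have hsq : HasDerivAt (fun x : ℂ ↦ x ^ 2) (2 * β) β := by simpa using hasDerivAt_pow 2 β
  exact (hG.hasDerivAt.comp β hsq).deriv

/-- Coefficient-jump formula across a double pole: if `f(x) = G(x²)/(1 − αx²)²` with `G`
analytic on the annulus `{r₁² < |w| < r₂²}`, so that the only singularities of `f` on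
`{r₁ < |x| < r₂}` are the (at most) double poles `x = ±α^{−1/2}` of modulus `ρ`, and if
`c`, `c'` are the Laurent coefficients of `f` in powers `x^{2l}` on the inner annulus
`{r₁ < |x| < ρ}` and the outer annulus `{ρ < |x| < r₂}` respectively, then for the fixed
square root `β = α^{−1/2}`:
`c'_l − c_l = −(l+1) α^l [(1−αx²)² f(x)]|_{x=β} + (1/2) α^l β (d/dx[(1−αx²)² f(x)])|_{x=β}`,
the bracketed function being the analytic continuation `x ↦ G(x²)`. -/
theorem stmt19 (r₁ ρ r₂ : ℝ) (h0 : 0 ≤ r₁) (h1 : r₁ < ρ) (h2 : ρ < r₂)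
    (α : ℂ) (hα : ‖α‖ ^ (-(1 : ℝ) / 2) = ρ)
    (β : ℂ) (hβ : β ^ 2 = α⁻¹)
    (f G : ℂ → ℂ)
    (hG : AnalyticOnNhd ℂ G {w : ℂ | r₁ ^ 2 < ‖w‖ ∧ ‖w‖ < r₂ ^ 2})
    (hf : ∀ x : ℂ, r₁ < ‖x‖ → ‖x‖ < r₂ → x ^ 2 ≠ α⁻¹ →
      f x = G (x ^ 2) / (1 - α * x ^ 2) ^ 2)
    (c c' : ℤ → ℂ)
    (hc : ∀ x : ℂ, r₁ < ‖x‖ → ‖x‖ < ρ →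
      HasSum (fun l : ℤ => c l * x ^ (2 * l)) (f x))
    (hc' : ∀ x : ℂ, ρ < ‖x‖ → ‖x‖ < r₂ →
      HasSum (fun l : ℤ => c' l * x ^ (2 * l)) (f x))
    (l : ℤ) :
    c' l - c l = -((l : ℂ) + 1) * α ^ l * G (β ^ 2)
        + (1 / 2) * α ^ l * β * deriv (fun x : ℂ => G (x ^ 2)) β := by
  have hρ : 0 < ρ := h0.trans_lt h1
  have hαρ : ‖α⁻¹‖ = ρ ^ 2 := by rw [norm_inv, ← hα, sq_rpow_neg_one_half (norm_nonneg α)]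
  have hα0 : α ≠ 0 := fun h ↦ norm_pos_iff.1 (hαρ ▸ pow_pos hρ 2) (by rw [h, inv_zero])
  have hsq : ∀ x : ℂ, ‖x‖ ≠ ρ → x ^ 2 ≠ α⁻¹ := fun x hx h ↦
    hx ((pow_left_inj₀ (norm_nonneg x) hρ.le two_ne_zero).1 (by rw [← norm_pow, h, hαρ]))
  let F : ℂ → ℂ := fun w ↦ G w / (1 - α * w) ^ 2
  have hjump := laurent_coeff_jump_of_double_pole hα0 (hαρ ▸ by gcongr) (hαρ ▸ by gcongr)
    hG.differentiableOn
    (fun w hw₁ hw₂ ↦ hasSum_zpow_of_hasSum_zpow_two_mul hρ.le (F := F)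
      (fun x hx₁ hx₂ ↦ hf x hx₁ (hx₂.trans h2) (hsq x hx₂.ne)) hc hw₁ (hαρ ▸ hw₂))
    (fun w hw₁ hw₂ ↦ hasSum_zpow_of_hasSum_zpow_two_mul (hρ.trans h2).le (F := F)
      (fun x hx₁ hx₂ ↦ hf x (h1.trans hx₁) hx₂ (hsq x hx₁.ne')) hc' (hαρ ▸ hw₁) hw₂) l
  have hGβ : DifferentiableAt ℂ G (β ^ 2) := by
    rw [hβ]
    exact (hG _ ⟨hαρ ▸ by gcongr, hαρ ▸ by gcongr⟩).differentiableAt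
  rw [hjump, deriv_comp_sq hGβ, hβ]
  linear_combination (-(α ^ l * deriv G α⁻¹)) * hβ
end
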